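/- Let P and Q be orthogonal projections on a complex Hilbert space H. Then the spectral radius of PQ + QP equals ‖PQ‖² + ‖PQ‖. -/

import Mathlib

/-!
`T = PQ + QP` is self-adjoint, so its spectral radius is its norm, the supremum of
`|re ⟪T x, x⟫| = 2 |re ⟪P x, Q x⟫|` over unit vectors `x`. With `c = ‖PQ‖`, writing
`⟪P x, Q x⟫ = ⟪P x, PQ (Q x)⟫` bounds this by `2c ‖P x‖ ‖Q x‖ ≤ c (‖P x‖² + ‖Q x‖²) ≤ c (1 + c)`.
Conversely, for a unit vector `y = Q y` with `t = ‖P y‖`, the test vector `x = t y + P y` has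
`re ⟪T x, x⟫ ≥ (t + t²) ‖x‖²`, and `t` can be taken arbitrarily close to `c`.
-/

open scoped InnerProductSpace
open RCLike ContinuousLinearMap

theorem IsSelfAdjoint.mul_add_mul_swap {R : Type*} [NonUnitalSemiring R] [StarRing R] {a b : R}
    (ha : IsSelfAdjoint a) (hb : IsSelfAdjoint b) : IsSelfAdjoint (a * b + b * a) := by
  simpa [ha.star_eq, hb.star_eq] using IsSelfAdjoint.add_star_self (a * b)

section
variable {𝕜 E : Type*} [RCLike 𝕜] [NormedAddCommGroup E] [InnerProductSpace 𝕜 E]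

theorem ContinuousLinearMap.re_inner_apply_self_le (A : E →L[𝕜] E) (x : E) :
    re ⟪A x, x⟫_𝕜 ≤ ‖A‖ * ‖x‖ ^ 2 :=
  calc re ⟪A x, x⟫_𝕜 ≤ ‖A x‖ * ‖x‖ := re_inner_le_norm _ _
    _ ≤ ‖A‖ * ‖x‖ * ‖x‖ := by gcongr; exact A.le_opNorm x
    _ = ‖A‖ * ‖x‖ ^ 2 := by ring

variable [CompleteSpace E] {P Q : E →L[𝕜] E}

theorem IsSelfAdjoint.inner_left_eq_inner_right {A : E →L[𝕜] E} (hA : IsSelfAdjoint A)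
    (x y : E) : ⟪A x, y⟫_𝕜 = ⟪x, A y⟫_𝕜 :=
  hA.isSymmetric x y

theorem IsSelfAdjoint.norm_le_of_abs_re_inner_self_le {A : E →L[𝕜] E} (hA : IsSelfAdjoint A)
    {M : ℝ} (hM : 0 ≤ M) (h : ∀ x, |re ⟪A x, x⟫_𝕜| ≤ M * ‖x‖ ^ 2) : ‖A‖ ≤ M := by
  rw [A.norm_eq_iSup_rayleighQuotient hA.isSymmetric]
  refine ciSup_le fun x ↦ ?_
  rcases eq_or_ne x 0 with rfl | hx
  · simpa using hM
  · rw [rayleighQuotient, reApplyInnerSelf_apply, abs_div, abs_sq, div_le_iff₀ (by positivity)]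
    exact h x

theorem IsSelfAdjoint.re_inner_mul_add_mul_apply_self (hP : IsSelfAdjoint P)
    (hQ : IsSelfAdjoint Q) (x : E) :
    re ⟪(P * Q + Q * P) x, x⟫_𝕜 = 2 * re ⟪P x, Q x⟫_𝕜 := by
  change re ⟪P (Q x) + Q (P x), x⟫_𝕜 = _
  rw [inner_add_left, map_add, hP.inner_left_eq_inner_right (Q x),
    hQ.inner_left_eq_inner_right (P x), inner_re_symm (Q x)]
  ring

namespace IsStarProjection

theorem apply_apply (hP : IsStarProjection P) (x : E) : P (P x) = P x :=
  DFunLike.congr_fun hP.isIdempotentElem.eq x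

theorem re_inner_apply_self (hP : IsStarProjection P) (x : E) :
    re ⟪P x, x⟫_𝕜 = ‖P x‖ ^ 2 :=
  calc re ⟪P x, x⟫_𝕜 = re ⟪P (P x), x⟫_𝕜 := by rw [hP.apply_apply]
    _ = re ⟪P x, P x⟫_𝕜 := by rw [hP.isSelfAdjoint.inner_left_eq_inner_right]
    _ = ‖P x‖ ^ 2 := (norm_sq_eq_re_inner _).symm

theorem norm_apply_le (hP : IsStarProjection P) (x : E) : ‖P x‖ ≤ ‖x‖ :=
  (P.le_of_opNorm_le hP.norm_le x).trans_eq (one_mul _)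

theorem abs_re_inner_apply_apply_le (hP : IsStarProjection P) (hQ : IsStarProjection Q) (x : E) :
    |re ⟪P x, Q x⟫_𝕜| ≤ ‖P * Q‖ * ‖P x‖ * ‖Q x‖ := by
  have h : ⟪P x, Q x⟫_𝕜 = ⟪P x, P (Q (Q x))⟫_𝕜 := by
    rw [hQ.apply_apply, ← hP.isSelfAdjoint.inner_left_eq_inner_right, hP.apply_apply]
  calc |re ⟪P x, Q x⟫_𝕜| ≤ ‖⟪P x, Q x⟫_𝕜‖ := abs_re_le_norm _
    _ ≤ ‖P x‖ * ‖P (Q (Q x))‖ := h ▸ norm_inner_le_norm _ _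
    _ ≤ ‖P x‖ * (‖P * Q‖ * ‖Q x‖) := by gcongr; exact (P * Q).le_opNorm (Q x)
    _ = ‖P * Q‖ * ‖P x‖ * ‖Q x‖ := by ring

theorem sq_norm_apply_add_sq_norm_apply_le (hP : IsStarProjection P) (hQ : IsStarProjection Q)
    (x : E) : ‖P x‖ ^ 2 + ‖Q x‖ ^ 2 ≤ (1 + ‖P * Q‖) * ‖x‖ ^ 2 := by
  set s := ‖P x‖ ^ 2 + ‖Q x‖ ^ 2
  have hs : s ≤ ‖P x + Q x‖ * ‖x‖ :=
    calc s = re ⟪P x + Q x, x⟫_𝕜 := by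
          rw [inner_add_left, map_add, hP.re_inner_apply_self, hQ.re_inner_apply_self]
      _ ≤ ‖P x + Q x‖ * ‖x‖ := re_inner_le_norm _ _
  have hsum : ‖P x + Q x‖ ^ 2 ≤ (1 + ‖P * Q‖) * s := by
    rw [norm_add_sq (𝕜 := 𝕜)]
    nlinarith [(abs_le.mp (abs_re_inner_apply_apply_le hP hQ x)).2,
      mul_nonneg (norm_nonneg (P * Q)) (sq_nonneg (‖P x‖ - ‖Q x‖))]
  rcases (by positivity : 0 ≤ s).eq_or_lt with h0 | h0
  · rw [← h0]; positivity
  refine le_of_mul_le_mul_right ?_ h0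
  calc s * s ≤ (‖P x + Q x‖ * ‖x‖) * (‖P x + Q x‖ * ‖x‖) := mul_self_le_mul_self h0.le hs
    _ = ‖P x + Q x‖ ^ 2 * ‖x‖ ^ 2 := by ring
    _ ≤ (1 + ‖P * Q‖) * s * ‖x‖ ^ 2 := by gcongr
    _ = (1 + ‖P * Q‖) * ‖x‖ ^ 2 * s := by ring

theorem norm_mul_add_mul_le (hP : IsStarProjection P) (hQ : IsStarProjection Q) :
    ‖P * Q + Q * P‖ ≤ ‖P * Q‖ + ‖P * Q‖ ^ 2 := by
  refine (hP.isSelfAdjoint.mul_add_mul_swap hQ.isSelfAdjoint).norm_le_of_abs_re_inner_self_le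
    (by positivity) fun x ↦ ?_
  rw [hP.isSelfAdjoint.re_inner_mul_add_mul_apply_self hQ.isSelfAdjoint, abs_mul, abs_two]
  have hPQ := abs_re_inner_apply_apply_le hP hQ x
  have hsum := sq_norm_apply_add_sq_norm_apply_le hP hQ x
  nlinarith [mul_nonneg (norm_nonneg (P * Q)) (sq_nonneg (‖P x‖ - ‖Q x‖)),
    mul_le_mul_of_nonneg_left hsum (norm_nonneg (P * Q))]

theorem add_sq_norm_apply_le_norm_mul_add_mul (hP : IsStarProjection P)
    (hQ : IsStarProjection Q) {y : E} (hQy : Q y = y) (hy : ‖y‖ = 1) :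
    ‖P y‖ + ‖P y‖ ^ 2 ≤ ‖P * Q + Q * P‖ := by
  rcases (norm_nonneg (P y)).eq_or_lt with ht | ht
  · rw [← ht]; simp
  set t := ‖P y‖
  set v := P y
  have hvy : re ⟪v, y⟫_𝕜 = t ^ 2 := hP.re_inner_apply_self y
  have hQv : t ^ 2 ≤ ‖Q v‖ :=
    calc t ^ 2 = re ⟪Q v, y⟫_𝕜 := by rw [hQ.isSelfAdjoint.inner_left_eq_inner_right, hQy, hvy]
      _ ≤ ‖Q v‖ * ‖y‖ := re_inner_le_norm _ _
      _ = ‖Q v‖ := by rw [hy, mul_one]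
  set x := (t : 𝕜) • y + v
  have hPx : P x = ((t + 1 : ℝ) : 𝕜) • v := by
    rw [map_add, map_smul, hP.apply_apply, ofReal_add, ofReal_one, add_smul, one_smul]
  have hQx : Q x = (t : 𝕜) • y + Q v := by rw [map_add, map_smul, hQy]
  have hx : ‖x‖ ^ 2 = 2 * t ^ 2 * (1 + t) := by
    rw [norm_add_sq (𝕜 := 𝕜), norm_smul, norm_ofReal, inner_smul_real_left, smul_re,
      inner_re_symm, hvy, hy, abs_of_pos ht]
    ring
  have hinner : re ⟪P x, Q x⟫_𝕜 = (t + 1) * (t ^ 3 + ‖Q v‖ ^ 2) := by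
    rw [hPx, hQx, inner_smul_real_left, smul_re, inner_add_right, map_add,
      inner_smul_real_right, smul_re, hvy, inner_re_symm, hQ.re_inner_apply_self]
    ring
  have hbound := (P * Q + Q * P).re_inner_apply_self_le x
  rw [hP.isSelfAdjoint.re_inner_mul_add_mul_apply_self hQ.isSelfAdjoint, hinner, hx] at hbound
  have hQv4 : t ^ 4 ≤ ‖Q v‖ ^ 2 := by nlinarith
  exact le_of_mul_le_mul_right (by nlinarith) (by positivity : 0 < 2 * t ^ 2 * (1 + t))

theorem add_sq_norm_mul_le_norm_mul_add_mul (hP : IsStarProjection P)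
    (hQ : IsStarProjection Q) : ‖P * Q‖ + ‖P * Q‖ ^ 2 ≤ ‖P * Q + Q * P‖ := by
  obtain ⟨s, hs0, hsN⟩ : ∃ s : ℝ, 0 ≤ s ∧ s + s ^ 2 = ‖P * Q + Q * P‖ := by
    have hN : 1 ≤ 1 + 4 * ‖P * Q + Q * P‖ := by linarith [norm_nonneg (P * Q + Q * P)]
    refine ⟨(√(1 + 4 * ‖P * Q + Q * P‖) - 1) / 2, by linarith [Real.one_le_sqrt.mpr hN], ?_⟩
    linear_combination Real.sq_sqrt (zero_le_one.trans hN) / 4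
  suffices ‖P * Q‖ ≤ s by nlinarith [norm_nonneg (P * Q)]
  refine opNorm_le_bound _ hs0 fun z ↦ ?_
  change ‖P (Q z)‖ ≤ s * ‖z‖
  rcases eq_or_ne (Q z) 0 with hz | hz
  · rw [hz, map_zero, norm_zero]; positivity
  have hQz : 0 < ‖Q z‖ := norm_pos_iff.mpr hz
  set y := ((‖Q z‖⁻¹ : ℝ) : 𝕜) • Q z
  have hy : ‖y‖ = 1 := by
    rw [norm_smul, norm_ofReal, abs_of_pos (inv_pos.mpr hQz), inv_mul_cancel₀ hQz.ne']
  have hQy : Q y = y := by rw [map_smul, hQ.apply_apply]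
  have hPy : ‖P (Q z)‖ = ‖Q z‖ * ‖P y‖ := by
    rw [map_smul, norm_smul, norm_ofReal, abs_of_pos (inv_pos.mpr hQz),
      mul_inv_cancel_left₀ hQz.ne']
  have hPys : ‖P y‖ ≤ s := by
    nlinarith [add_sq_norm_apply_le_norm_mul_add_mul hP hQ hQy hy, norm_nonneg (P y)]
  calc ‖P (Q z)‖ = ‖Q z‖ * ‖P y‖ := hPy
    _ ≤ ‖z‖ * s := by gcongr; exact hQ.norm_apply_le z
    _ = s * ‖z‖ := mul_comm _ _

theorem norm_mul_add_mul_eq (hP : IsStarProjection P) (hQ : IsStarProjection Q) :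
    ‖P * Q + Q * P‖ = ‖P * Q‖ + ‖P * Q‖ ^ 2 :=
  (norm_mul_add_mul_le hP hQ).antisymm (add_sq_norm_mul_le_norm_mul_add_mul hP hQ)

end IsStarProjection

end

/-- For orthogonal projections `P, Q` on a complex Hilbert space, the spectral radius of
`PQ + QP` equals `‖PQ‖² + ‖PQ‖`. -/
theorem spectralRadius_anticommutator
    {H : Type*} [NormedAddCommGroup H] [InnerProductSpace ℂ H] [CompleteSpace H]
    (P Q : H →L[ℂ] H) (hP : IsSelfAdjoint P) (hP2 : P * P = P)
    (hQ : IsSelfAdjoint Q) (hQ2 : Q * Q = Q) :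
    spectralRadius ℂ (P * Q + Q * P) = ENNReal.ofReal (‖P * Q‖ ^ 2 + ‖P * Q‖) := by
  rw [(hP.mul_add_mul_swap hQ).spectralRadius_eq_nnnorm, ← enorm_eq_nnnorm, ← ofReal_norm,
    IsStarProjection.norm_mul_add_mul_eq ⟨hP2, hP⟩ ⟨hQ2, hQ⟩, add_comm]
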